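/- Let M_0 and M_1 be the 4×4 upper unitriangular integer matrices where M_0 has 1s in positions (1,2) and (3,4) and M_1 has a 1 in position (2,3) (other off-diagonal entries zero). For a binary word X let M_X be the ordered product of generators. Then M_X has first row (1, N_0(X), N_{01}(X), N_{010}(X)), second row (0, 1, N_1(X), N_{10}(X)), third row (0,0,1,N_0(X)), and fourth row (0,0,0,1). -/

import Mathlib

def patCount (w X : List Bool) : ℕ := X.sublists.count w

def Mgen : Bool → Matrix (Fin 4) (Fin 4) ℤ
  | false => !![1, 1, 0, 0; 0, 1, 0, 0; 0, 0, 1, 1; 0, 0, 0, 1]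
  | true  => !![1, 0, 0, 0; 0, 1, 1, 0; 0, 0, 1, 0; 0, 0, 0, 1]

def MX (X : List Bool) : Matrix (Fin 4) (Fin 4) ℤ := (X.map Mgen).prod

/-!
Appending a letter `a` to `X` multiplies `M_X` on the right by `M_a`, and it adds to `N_w(X)` the
number `N_{w'}(X)` whenever `w = w'a` (occurrences of `w` using the new last letter). Right
multiplication by `M_0` adds column 1 to column 2 and column 3 to column 4; by `M_1` it adds
column 2 to column 3. These are exactly the updates of the claimed entries, so the theorem
follows by induction on `X` from the right.
-/

theorem List.count_map_append_singleton {α : Type*} [DecidableEq α] (w : List α) (a : α)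
    (S : List (List α)) :
    (S.map (· ++ [a])).count w = if w.getLast? = some a then S.count w.dropLast else 0 := by
  induction w using List.reverseRecOn with
  | nil => simp [List.count_eq_zero_of_not_mem]
  | append_singleton v b _ =>
    by_cases hba : b = a
    · subst hba
      simpa using List.count_map_of_injective S (· ++ [b]) (List.append_left_injective [b]) v
    · simp only [List.getLast?_concat, Option.some.injEq, hba, if_false]
      refine List.count_eq_zero_of_not_mem fun hmem => hba ?_
      obtain ⟨u, -, hu⟩ := List.mem_map.1 hmem
      exact List.singleton_inj.1 (List.append_inj' hu rfl).2.symm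

theorem patCount_concat (w Y : List Bool) (a : Bool) :
    patCount w (Y ++ [a]) =
      patCount w Y + if w.getLast? = some a then patCount w.dropLast Y else 0 := by
  rw [patCount, List.sublists_concat, List.count_append, List.count_map_append_singleton]
  rfl

theorem patCount_nil_left (X : List Bool) : patCount [] X = 1 := by
  induction X using List.reverseRecOn with
  | nil => rfl
  | append_singleton Y a ih => simp [patCount_concat, ih]

theorem patCount_nil_right {w : List Bool} (hw : w ≠ []) : patCount w [] = 0 := by
  simp [patCount, hw.symm]

theorem MX_concat (Y : List Bool) (a : Bool) : MX (Y ++ [a]) = MX Y * Mgen a := by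
  simp [MX]

theorem unitriangular_mul_Mgen_false (a b c d e f : ℤ) :
    !![1, a, b, c; 0, 1, d, e; 0, 0, 1, f; 0, 0, 0, 1] * Mgen false =
      !![1, a + 1, b, c + b; 0, 1, d, e + d; 0, 0, 1, f + 1; 0, 0, 0, 1] := by
  ext i j; fin_cases i <;> fin_cases j <;> simp [Mgen, Matrix.mul_apply, Fin.sum_univ_four] <;> ring

theorem unitriangular_mul_Mgen_true (a b c d e f : ℤ) :
    !![1, a, b, c; 0, 1, d, e; 0, 0, 1, f; 0, 0, 0, 1] * Mgen true =
      !![1, a, b + a, c; 0, 1, d + 1, e; 0, 0, 1, f; 0, 0, 0, 1] := by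
  ext i j; fin_cases i <;> fin_cases j <;> simp [Mgen, Matrix.mul_apply, Fin.sum_univ_four] <;> ring

theorem heisenberg4_pattern_counts (X : List Bool) :
    MX X = !![1, (patCount [false] X : ℤ), (patCount [false, true] X : ℤ),
                (patCount [false, true, false] X : ℤ);
              0, 1, (patCount [true] X : ℤ), (patCount [true, false] X : ℤ);
              0, 0, 1, (patCount [false] X : ℤ);
              0, 0, 0, 1] := by
  induction X using List.reverseRecOn with
  | nil =>
    simp only [patCount_nil_right (List.cons_ne_nil _ _), Nat.cast_zero]
    ext i j; fin_cases i <;> fin_cases j <;> rfl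
  | append_singleton Y a ih =>
    rw [MX_concat, ih]
    cases a
    · rw [unitriangular_mul_Mgen_false]
      simp [patCount_concat, patCount_nil_left]
    · rw [unitriangular_mul_Mgen_true]
      simp [patCount_concat, patCount_nil_left]
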